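/- For every c ∈ ℝ, the pair x_c(t) = c·|t|^{3/2}, u_c(t) = (31/4)·c·t²·|t|^{3/2} satisfies, for every t ≠ 0, t⁴·x_c''(t) + 4t³·x_c'(t) + t²·x_c(t) = u_c(t); moreover x_c and u_c are continuously differentiable on ℝ with x_c(0) = x_c'(0) = 0 and u_c(0) = u_c'(0) = 0. In particular, the initial data x(0) = 0, x'(0) = 0 at the singular point t = 0 admit a one-parameter family of distinct continuations: x_c ≠ x_{c'} on every interval [0,ε], ε > 0, whenever c ≠ c'. -/

import Mathlib

/-!
For `p > 1` the function `x(t) = |t|^p` is `C¹` with `x(0) = x'(0) = 0`, and it satisfies the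
Euler relations `t x'(t) = p x(t)` everywhere and `t² x''(t) = p (p - 1) x(t)` for `t ≠ 0`. Hence
`t⁴ x'' + 4 t³ x' + t² x = (p (p - 1) + 4 p + 1) t² x`, and `p = 3/2` gives the factor `31/4`.
All multiples `c x` therefore share the zero initial data at `t = 0`, yet differ at every `t > 0`.
-/

open Real

theorem hasDerivAt_abs_rpow_of_ne_zero {x : ℝ} (hx : x ≠ 0) (p : ℝ) :
    HasDerivAt (fun y : ℝ ↦ |y| ^ p) (p * |x| ^ (p - 2) * x) x := by
  convert (hasDerivAt_abs hx).rpow_const (p := p) (Or.inl (abs_ne_zero.2 hx)) using 1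
  have hpow : |x| ^ (p - 1) = |x| ^ (p - 2) * |x| := by
    rw [← rpow_add_one (abs_ne_zero.2 hx)]; ring_nf
  linear_combination (p * |x| ^ (p - 2)) * (sign_mul_abs x).symm - (SignType.sign x * p : ℝ) * hpow

theorem deriv_abs_rpow {p : ℝ} (hp : 1 < p) :
    deriv (fun x : ℝ ↦ |x| ^ p) = fun x ↦ p * |x| ^ (p - 2) * x :=
  funext fun x ↦ (hasDerivAt_abs_rpow x hp).deriv

theorem contDiff_abs_rpow {p : ℝ} (hp : 1 < p) : ContDiff ℝ 1 fun x : ℝ ↦ |x| ^ p := by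
  simpa using contDiff_norm_rpow (E := ℝ) hp

theorem abs_rpow_sub_two_mul_sq {x : ℝ} (hx : x ≠ 0) (p : ℝ) :
    |x| ^ (p - 2) * x ^ 2 = |x| ^ p := by
  rw [← sq_abs, ← rpow_natCast, ← rpow_add (abs_pos.2 hx)]
  norm_num

theorem mul_deriv_abs_rpow {p : ℝ} (hp : 1 < p) (x : ℝ) :
    x * deriv (fun y : ℝ ↦ |y| ^ p) x = p * |x| ^ p := by
  rcases eq_or_ne x 0 with rfl | hx
  · simp [zero_rpow (by linarith : p ≠ 0)]
  rw [deriv_abs_rpow hp, ← abs_rpow_sub_two_mul_sq hx]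
  ring

theorem sq_mul_deriv_deriv_abs_rpow {p : ℝ} (hp : 1 < p) {x : ℝ} (hx : x ≠ 0) :
    x ^ 2 * deriv (deriv fun y : ℝ ↦ |y| ^ p) x = p * (p - 1) * |x| ^ p := by
  have hderiv : HasDerivAt (fun y ↦ |y| ^ (p - 2) * y) _ x :=
    (hasDerivAt_abs_rpow_of_ne_zero hx (p - 2)).mul (hasDerivAt_id' x)
  rw [deriv_abs_rpow hp, funext fun y ↦ mul_assoc p (|y| ^ (p - 2)) y, (hderiv.const_mul p).deriv]
  linear_combination p * (p - 2) * x ^ 2 * abs_rpow_sub_two_mul_sq hx (p - 2)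
    + p * (p - 1) * abs_rpow_sub_two_mul_sq hx p

/-- For every `c ∈ ℝ`, the pair `x_c t = c·|t|^{3/2}`,
`u_c t = (31/4)·c·t²·|t|^{3/2}` satisfies `t⁴·x_c'' + 4t³·x_c' + t²·x_c = u_c` for
`t ≠ 0`; both are `C¹` on `ℝ` with `x_c 0 = x_c' 0 = 0` and `u_c 0 = u_c' 0 = 0`; and
for `c ≠ c'` the continuations `x_c`, `x_{c'}` differ on every interval `[0,ε]`,
`ε > 0`. -/
theorem pendulum_linear_nonunique_continuation :
    (∀ c : ℝ,
      (∀ t : ℝ, t ≠ 0 →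
        t ^ 4 * deriv (deriv (fun s : ℝ => c * |s| ^ (3 / 2 : ℝ))) t
          + 4 * t ^ 3 * deriv (fun s : ℝ => c * |s| ^ (3 / 2 : ℝ)) t
          + t ^ 2 * (c * |t| ^ (3 / 2 : ℝ))
        = 31 / 4 * c * t ^ 2 * |t| ^ (3 / 2 : ℝ)) ∧
      ContDiff ℝ 1 (fun s : ℝ => c * |s| ^ (3 / 2 : ℝ)) ∧
      ContDiff ℝ 1 (fun s : ℝ => 31 / 4 * c * s ^ 2 * |s| ^ (3 / 2 : ℝ)) ∧
      c * |(0 : ℝ)| ^ (3 / 2 : ℝ) = 0 ∧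
      deriv (fun s : ℝ => c * |s| ^ (3 / 2 : ℝ)) 0 = 0 ∧
      31 / 4 * c * (0 : ℝ) ^ 2 * |(0 : ℝ)| ^ (3 / 2 : ℝ) = 0 ∧
      deriv (fun s : ℝ => 31 / 4 * c * s ^ 2 * |s| ^ (3 / 2 : ℝ)) 0 = 0) ∧
    (∀ c c' : ℝ, c ≠ c' → ∀ ε : ℝ, 0 < ε →
      ∃ t ∈ Set.Icc (0 : ℝ) ε, c * |t| ^ (3 / 2 : ℝ) ≠ c' * |t| ^ (3 / 2 : ℝ)) := by
  have hp : (1 : ℝ) < 3 / 2 := by norm_num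
  have hx : ContDiff ℝ 1 fun s : ℝ ↦ |s| ^ (3 / 2 : ℝ) := contDiff_abs_rpow hp
  refine ⟨fun c ↦ ⟨fun t ht ↦ ?_, contDiff_const.mul hx,
    (contDiff_const.mul (contDiff_id.pow 2)).mul hx, by simp,
    by simp [deriv_const_mul_field', deriv_abs_rpow hp], by simp, ?_⟩, ?_⟩
  · simp only [deriv_const_mul_field']
    linear_combination c * t ^ 2 * sq_mul_deriv_deriv_abs_rpow hp ht
      + 4 * c * t ^ 2 * mul_deriv_abs_rpow hp t
  · have h : HasDerivAt (fun s : ℝ ↦ 31 / 4 * c * s ^ 2 * |s| ^ (3 / 2 : ℝ)) _ 0 :=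
      ((hasDerivAt_pow 2 0).const_mul (31 / 4 * c)).mul (hasDerivAt_abs_rpow 0 hp)
    simpa using h.deriv
  · intro c c' hcc' ε hε
    refine ⟨ε, ⟨hε.le, le_rfl⟩, fun h ↦ hcc' (mul_right_cancel₀ ?_ h)⟩
    positivity
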